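/- arXiv:2109.03370 — 9 statements merged into one kernel-verified Lean document; each statement's English description precedes it below -/
import Mathlib

section
/- (Milgrom–Shannon Monotone Selection Theorem.) Let A be a lattice, Θ a partially ordered set, and f : A × Θ → ℝ. Suppose f is quasisupermodular in a and satisfies the strict single crossing property in (a; θ). Then every selection from the argmax correspondence is nondecreasing: for all θ'' < θ' in Θ, if a'' maximizes f(·, θ'') over A and a' maximizes f(·, θ') over A, then a'' ≤ a'. -/
/-- Milgrom–Shannon Monotone Selection Theorem: if `f` is quasisupermodular in `a` and
satisfies the strict single crossing property in `(a; θ)`, then every selection from the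
argmax correspondence is nondecreasing. -/
theorem milgrom_shannon_monotone_selection
    {A : Type*} {Θ : Type*} [Lattice A] [PartialOrder Θ]
    (f : A → Θ → ℝ)
    (hqsm : ∀ (θ : Θ) (a b : A),
      (f a θ ≥ f (a ⊓ b) θ → f (a ⊔ b) θ ≥ f b θ) ∧
      (f a θ > f (a ⊓ b) θ → f (a ⊔ b) θ > f b θ))
    (hssc : ∀ a'' a' : A, a'' < a' → ∀ θ'' θ' : Θ, θ'' < θ' →
      f a' θ'' ≥ f a'' θ'' → f a' θ' > f a'' θ')
    (θ'' θ' : Θ) (hθ : θ'' < θ') (a'' a' : A)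
    (hmax'' : ∀ b : A, f b θ'' ≤ f a'' θ'')
    (hmax' : ∀ b : A, f b θ' ≤ f a' θ') :
    a'' ≤ a' := by
  by_contra hle
  have hlt : a' < a'' ⊔ a' := right_lt_sup.mpr hle
  have hweak : f (a'' ⊔ a') θ'' ≥ f a' θ'' := (hqsm θ'' a'' a').1 (hmax'' _)
  have hstrict : f (a'' ⊔ a') θ' > f a' θ' := hssc a' (a'' ⊔ a') hlt θ'' θ' hθ hweak
  exact (hmax' _).not_gt hstrict
end

section
/- (Lemma 1(i): monotonicity of the receiver's equilibrium strategy.) Let T, S, Z be linear orders and u : T × S × Z → ℝ be strictly decreasing in s and (weakly) increasing in t. Let σ : Z → S and τ : S → T be sender-optimal, i.e., u(τ(σ(z)), σ(z), z) ≥ u(τ(s), s, z) for every z ∈ Z and s ∈ S. Then for every z ∈ Z and every s ∈ S with s < σ(z), one has τ(s) < τ(σ(z)); in particular τ is strictly increasing on the range of σ. -/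
theorem lt_of_payoff_le_of_lt {T S β : Type*} [LinearOrder T] [Preorder S] [Preorder β]
    {v : T → S → β} (hs : ∀ t, StrictAnti (v t)) (ht : ∀ s, Monotone (v · s))
    {t t' : T} {s s' : S} (hle : v t s ≤ v t' s') (hlt : s < s') : t < t' := by
  by_contra! hge
  have : v t' s' < v t' s' :=
    calc v t' s' < v t' s := hs t' hlt
      _ ≤ v t s := ht s hge
      _ ≤ v t' s' := hle
  exact lt_irrefl _ this

theorem receiver_strategy_monotone_general
    {T S Z : Type*} [LinearOrder T] [LinearOrder S]
    (u : T → S → Z → ℝ)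
    (hs : ∀ (t : T) (z : Z), StrictAnti (fun s => u t s z))
    (ht : ∀ (s : S) (z : Z), Monotone (fun t => u t s z))
    (σ : Z → S) (τ : S → T)
    (hopt : ∀ (z : Z) (s : S), u (τ s) s z ≤ u (τ (σ z)) (σ z) z) :
    (∀ (z : Z) (s : S), s < σ z → τ s < τ (σ z)) ∧
      (∀ z₁ z₂ : Z, σ z₁ < σ z₂ → τ (σ z₁) < τ (σ z₂)) := by
  have below_equilibrium (z : Z) (s : S) (hlt : s < σ z) : τ s < τ (σ z) :=
    lt_of_payoff_le_of_lt (v := fun t s => u t s z) (hs · z) (ht · z) (hopt z s) hlt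
  exact ⟨below_equilibrium, fun z₁ z₂ => below_equilibrium z₂ (σ z₁)⟩

/-- Lemma 1(i): in a pure-strategy PBE with sender utility strictly decreasing in the
action and weakly increasing in the reaction, the receiver's strategy is increasing:
`s < σ z` implies `τ s < τ (σ z)`; in particular `τ` is strictly increasing on the range
of `σ`. -/
theorem receiver_strategy_monotone
    {T S Z : Type*} [LinearOrder T] [LinearOrder S] [LinearOrder Z]
    (u : T → S → Z → ℝ)
    (hs : ∀ (t : T) (z : Z), StrictAnti (fun s => u t s z))
    (ht : ∀ (s : S) (z : Z), Monotone (fun t => u t s z))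
    (σ : Z → S) (τ : S → T)
    (hopt : ∀ (z : Z) (s : S), u (τ s) s z ≤ u (τ (σ z)) (σ z) z) :
    (∀ (z : Z) (s : S), s < σ z → τ s < τ (σ z)) ∧
      (∀ z₁ z₂ : Z, σ z₁ < σ z₂ → τ (σ z₁) < τ (σ z₂)) :=
  receiver_strategy_monotone_general u hs ht σ τ hopt
end

section
/- (Lemma 1(ii): monotonicity of the sender's equilibrium strategy.) Let T, S, Z be linear orders and u : T × S × Z → ℝ be monotone-supermodular (strictly decreasing in s, strictly increasing in t, and satisfying the strict single crossing property in ((t,s); z)). If σ : Z → S and τ : S → T are sender-optimal, then σ is monotone nondecreasing: z' < z implies σ(z') ≤ σ(z). -/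
/-!
Along the receiver's reactions, the sender's payoff `s ↦ u (τ s) s z` inherits strict single
crossing in `(s; z)`: since `u` is strictly decreasing in `s` and increasing in `t`, a higher
action can be weakly preferred only if it earns a strictly higher reaction, and then single
crossing in `((t, s); z)` applies. A maximizer of a strictly single crossing function is
monotone in the parameter: if `z < z'` but `σ z' < σ z`, type `z` weakly prefers `σ z`, so
type `z'` strictly prefers it to its own choice.
-/

def StrictSingleCrossing {α Z β : Type*} [Preorder α] [Preorder Z] [Preorder β]
    (f : α → Z → β) : Prop :=
  ∀ ⦃a a' : α⦄, a < a' → ∀ ⦃z z' : Z⦄, z < z' → f a z ≤ f a' z → f a z' < f a' z'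

namespace StrictSingleCrossing

variable {T S Z β : Type*} [LinearOrder T] [LinearOrder S] [PartialOrder Z] [Preorder β]

theorem comp_graph {f : T × S → Z → β} (hf : StrictSingleCrossing f)
    (hmono : ∀ s z, Monotone fun t => f (t, s) z)
    (hanti : ∀ t z, StrictAnti fun s => f (t, s) z) (τ : S → T) :
    StrictSingleCrossing fun s z => f (τ s, s) z := by
  intro s s' hs z z' hz hle
  have hτ : τ s < τ s' := by
    by_contra! hτ
    have hlt : f (τ s', s') z < f (τ s, s) z :=
      (hmono s' z hτ).trans_lt (hanti (τ s) z hs)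
    exact hlt.not_ge hle
  exact hf (Prod.mk_lt_mk.2 (Or.inl ⟨hτ, hs.le⟩)) hz hle

theorem monotone_of_maximizes {f : S → Z → β} (hf : StrictSingleCrossing f) {σ : Z → S}
    (hσ : ∀ z s, f s z ≤ f (σ z) z) : Monotone σ := by
  intro z z' hz
  rcases hz.eq_or_lt with rfl | hz
  · exact le_rfl
  by_contra! hσz
  exact (hf hσz hz (hσ z (σ z'))).not_ge (hσ z' (σ z))

end StrictSingleCrossing

/-- Lemma 1(ii): if the sender's utility is monotone-supermodular (strictly decreasing
in `s`, strictly increasing in `t`, and satisfying the strict single crossing property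
in `((t,s); z)`), then in any pure-strategy PBE the sender's strategy `σ` is monotone
nondecreasing. -/
theorem sender_strategy_monotone
    {T S Z : Type*} [LinearOrder T] [LinearOrder S] [LinearOrder Z]
    (u : T → S → Z → ℝ)
    (hs : ∀ (t : T) (z : Z), StrictAnti (fun s => u t s z))
    (ht : ∀ (s : S) (z : Z), StrictMono (fun t => u t s z))
    (hssc : ∀ (t'' t' : T) (s'' s' : S), (t'', s'') < (t', s') →
      ∀ z'' z' : Z, z'' < z' →
      u t' s' z'' ≥ u t'' s'' z'' → u t' s' z' > u t'' s'' z')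
    (σ : Z → S) (τ : S → T)
    (hopt : ∀ (z : Z) (s : S), u (τ s) s z ≤ u (τ (σ z)) (σ z) z) :
    Monotone σ := by
  have hcross : StrictSingleCrossing fun (p : T × S) z => u p.1 p.2 z :=
    fun ⟨_, _⟩ ⟨_, _⟩ hp _ _ hz hle => hssc _ _ _ _ hp _ _ hz hle
  have hsender : StrictSingleCrossing fun s z => u (τ s) s z :=
    hcross.comp_graph (fun s z => (ht s z).monotone) hs τ
  exact hsender.monotone_of_maximizes hopt
end

section
/- (Upward-deviation dominance; Case 2 in the proof of Proposition 1.) Let T, S, Z be linear orders, u : T × S × Z → ℝ monotone-supermodular (strictly decreasing in s, weakly increasing in t, and satisfying the strict single crossing property in ((t,s); z)), and let σ : Z → S, τ : S → T be sender-optimal with equilibrium utility U(z) := u(τ(σ(z)), σ(z), z). Then for all z', z'' ∈ Z with z' < z'', every s ∈ S with s > σ(z''), and every t ∈ T: if u(t, s, z') ≥ U(z'), then u(t, s, z'') > U(z''). -/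
/-!
Type `z'` weakly prefers `(t, s)` to its equilibrium, hence to mimicking `z''`. Since `s > σ z''`
and utility falls in the action, this forces `t ≥ τ (σ z'')`, so `(t, s)` lies above
`(τ (σ z''), σ z'')` and single crossing turns the weak preference of `z'` into a strict one
for `z''`.
-/

theorem le_of_le_of_lt_of_strictAnti_of_monotone {T S : Type*} [LinearOrder T] [Preorder S]
    (v : T → S → ℝ) (hs : ∀ t, StrictAnti (v t ·)) (ht : ∀ s, Monotone (v · s))
    {t₀ t : T} {s₀ s : S} (hlt : s₀ < s) (hle : v t₀ s₀ ≤ v t s) : t₀ ≤ t := by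
  by_contra! htt
  have : v t s < v t₀ s₀ :=
    calc v t s < v t s₀ := hs t hlt
      _ ≤ v t₀ s₀ := ht s₀ htt.le
  exact this.not_ge hle

/-- Upward-deviation dominance (Case 2 in the proof of Proposition 1): for `z' < z''` and
an action `s > σ z''`, if type `z'` weakly gains by deviating to `(t, s)` then type `z''`
strictly gains. -/
theorem upward_deviation_dominance
    {T S Z : Type*} [LinearOrder T] [LinearOrder S] [LinearOrder Z]
    (u : T → S → Z → ℝ)
    (hs : ∀ (t : T) (z : Z), StrictAnti (fun s => u t s z))
    (ht : ∀ (s : S) (z : Z), Monotone (fun t => u t s z))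
    (hssc : ∀ (t'' t' : T) (s'' s' : S), (t'', s'') < (t', s') →
      ∀ z'' z' : Z, z'' < z' →
      u t' s' z'' ≥ u t'' s'' z'' → u t' s' z' > u t'' s'' z')
    (σ : Z → S) (τ : S → T)
    (hopt : ∀ (z : Z) (s : S), u (τ s) s z ≤ u (τ (σ z)) (σ z) z)
    (U : Z → ℝ) (hU : ∀ z, U z = u (τ (σ z)) (σ z) z) :
    ∀ z' z'' : Z, z' < z'' → ∀ s : S, σ z'' < s → ∀ t : T,
      u t s z' ≥ U z' → u t s z'' > U z'' := by
  intro z' z'' hz s hσs t hdev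
  have hmimic : u (τ (σ z'')) (σ z'') z' ≤ u t s z' :=
    (hopt z' (σ z'')).trans ((hU z').symm.trans_le hdev)
  have hτ : τ (σ z'') ≤ t :=
    le_of_le_of_lt_of_strictAnti_of_monotone (fun t s => u t s z') (hs · z') (ht · z') hσs hmimic
  rw [hU]
  exact hssc _ _ _ _ (Prod.lt_iff.mpr (Or.inr ⟨hτ, hσs⟩)) z' z'' hz hmimic
end

section
/- (Downward-deviation dominance; Case 1 in the proof of Proposition 1.) Let T, S, Z be linear orders, u : T × S × Z → ℝ monotone-supermodular (strictly decreasing in s, weakly increasing in t, and satisfying the strict single crossing property in ((t,s); z)), and let σ : Z → S, τ : S → T be sender-optimal with equilibrium utility U(z) := u(τ(σ(z)), σ(z), z). Then for all z'', z' ∈ Z with z'' < z', every s ∈ S with s < σ(z''), and every t ∈ T: if u(t, s, z'') ≤ U(z''), then u(t, s, z') < U(z'). -/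
/-!
A downward deviation that type `z''` finds weakly unprofitable cannot come with a higher
reaction than `τ (σ z'')`: lowering the action strictly raises utility and raising the
reaction weakly does. So `(t, s)` lies strictly below the equilibrium pair of `z''` in the
product order, and single crossing makes it strictly worse than that pair for `z'`, who can
always mimic `z''`.
-/

theorem prod_lt_of_apply_le_of_snd_lt {α β γ : Type*} [LinearOrder α] [Preorder β] [Preorder γ]
    (f : α → β → γ) (hmono : ∀ b, Monotone (f · b)) (hanti : ∀ a, StrictAnti (f a))
    {a a₀ : α} {b b₀ : β} (hb : b < b₀) (h : f a b ≤ f a₀ b₀) : (a, b) < (a₀, b₀) := by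
  refine Prod.lt_iff.mpr (Or.inr ⟨?_, hb⟩)
  by_contra! ha
  exact (h.trans_lt ((hanti a₀ hb).trans_le (hmono b ha.le))).false

/-- Downward-deviation dominance (Case 1 in the proof of Proposition 1): for `z'' < z'`
and an action `s < σ z''`, if type `z''` weakly loses by deviating to `(t, s)` then type
`z'` strictly loses. -/
theorem downward_deviation_dominance
    {T S Z : Type*} [LinearOrder T] [LinearOrder S] [LinearOrder Z]
    (u : T → S → Z → ℝ)
    (hs : ∀ (t : T) (z : Z), StrictAnti (fun s => u t s z))
    (ht : ∀ (s : S) (z : Z), Monotone (fun t => u t s z))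
    (hssc : ∀ (t'' t' : T) (s'' s' : S), (t'', s'') < (t', s') →
      ∀ z'' z' : Z, z'' < z' →
      u t' s' z'' ≥ u t'' s'' z'' → u t' s' z' > u t'' s'' z')
    (σ : Z → S) (τ : S → T)
    (hopt : ∀ (z : Z) (s : S), u (τ s) s z ≤ u (τ (σ z)) (σ z) z)
    (U : Z → ℝ) (hU : ∀ z, U z = u (τ (σ z)) (σ z) z) :
    ∀ z'' z' : Z, z'' < z' → ∀ s : S, s < σ z'' → ∀ t : T,
      u t s z'' ≤ U z'' → u t s z' < U z' := by
  intro z'' z' hz s hs_lt t hle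
  rw [hU] at hle
  have hlt : (t, s) < (τ (σ z''), σ z'') :=
    prod_lt_of_apply_le_of_snd_lt (fun t s => u t s z'') (ht · z'') (hs · z'') hs_lt hle
  calc u t s z' < u (τ (σ z'')) (σ z'') z' := hssc _ _ _ _ hlt z'' z' hz hle
    _ ≤ U z' := hU z' ▸ hopt z' (σ z'')
end

section
/- (Proposition 1, item 1: D1 pins down the belief at off-path actions created by a discontinuity of σ.) Let T, S be linear orders, Z a densely ordered linear order, u : T × S × Z → ℝ monotone-supermodular, and σ : Z → S, τ : S → T sender-optimal with equilibrium utility U(z) := u(τ(σ(z)), σ(z), z). Suppose z ∈ Z and s ∈ S satisfy: s is not in the range of σ, s < σ(z), and σ(k) ≤ s for every k < z (i.e., s lies in the off-path gap created by the discontinuity of σ at z). Then every type z₀ ≠ z is D1-dominated at s: there exists z' ∈ Z such that for every t ∈ T, u(t, s, z₀) ≥ U(z₀) implies u(t, s, z') > U(z'). Consequently, any belief at s passing Criterion D1 has support contained in {z}. -/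
/-!
A type `z₀` below the discontinuity is dominated by a type `z'` with `z₀ < z' < z`: the action
`σ z'` lies strictly below `s`, so any reaction making `s` weakly attractive to `z₀` beats
`z₀`'s own payoff from `σ z'`, and single crossing makes `s` strictly attractive to the higher
type `z'`. A type `z₀` above the discontinuity is dominated by `z` itself: `s` is strictly
below `σ z`, and single crossing, run downwards from `z₀` to `z`, does the rest.
-/

section

variable {T S Z : Type*}

def D1Dominated (u : T → S → Z → ℝ) (U : Z → ℝ) (s : S) (w : Z) : Prop :=
  ∃ z' : Z, ∀ t : T, u t s w ≥ U w → u t s z' > U z'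

variable [LinearOrder T] [LinearOrder S] [LinearOrder Z]

/-- Strict single crossing in `((t, s); z)`, for the product (not lexicographic) order on
`T × S`. -/
def SingleCrossing (u : T → S → Z → ℝ) : Prop :=
  ∀ (t'' t' : T) (s'' s' : S), (t'', s'') < (t', s') →
    ∀ z'' z' : Z, z'' < z' → u t' s' z'' ≥ u t'' s'' z'' → u t' s' z' > u t'' s'' z'

namespace SingleCrossing

variable {u : T → S → Z → ℝ} {t t' : T} {s s' : S} {z₀ z' : Z}

theorem lt_at_higher_type_of_le (hsc : SingleCrossing u)
    (hs : ∀ t z, StrictAnti (fun s => u t s z)) (ht : ∀ s z, StrictMono (fun t => u t s z))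
    (hss' : s' < s) (hz : z₀ < z') (hle : u t' s' z₀ ≤ u t s z₀) :
    u t' s' z' < u t s z' := by
  have htt' : t' ≤ t := by
    by_contra! hlt
    have : u t s z₀ < u t' s' z₀ :=
      calc u t s z₀ < u t' s z₀ := ht s z₀ hlt
        _ < u t' s' z₀ := hs t' z₀ hss'
    exact this.not_ge hle
  exact hsc t' t s' s (Prod.mk_lt_mk.2 (Or.inr ⟨htt', hss'⟩)) z₀ z' hz hle

theorem lt_at_lower_type_of_le (hsc : SingleCrossing u)
    (hs : ∀ t z, StrictAnti (fun s => u t s z)) (ht : ∀ s z, StrictMono (fun t => u t s z))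
    (hss' : s < s') (hz : z' < z₀) (hle : u t' s' z₀ ≤ u t s z₀) :
    u t' s' z' < u t s z' := by
  rcases le_or_gt t' t with htt' | htt'
  · calc u t' s' z' < u t' s z' := hs t' z' hss'
      _ ≤ u t s z' := (ht s z').monotone htt'
  · by_contra! hge
    exact (hsc t t' s s' (Prod.mk_lt_mk.2 (Or.inl ⟨htt', hss'.le⟩)) z' z₀ hz hge).not_ge hle

end SingleCrossing

section Equilibrium

variable {u : T → S → Z → ℝ} {σ : Z → S} {τ : S → T} {s : S} {z z₀ : Z}

theorem d1Dominated_of_lt_of_gap [DenselyOrdered Z] (hsc : SingleCrossing u)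
    (hs : ∀ t z, StrictAnti (fun s => u t s z)) (ht : ∀ s z, StrictMono (fun t => u t s z))
    (hopt : ∀ z s, u (τ s) s z ≤ u (τ (σ z)) (σ z) z)
    (hoff : s ∉ Set.range σ) (hgap : ∀ k, k < z → σ k ≤ s) (hz₀ : z₀ < z) :
    D1Dominated u (fun z => u (τ (σ z)) (σ z) z) s z₀ := by
  obtain ⟨z', hz₀z', hz'z⟩ := exists_between hz₀
  have hσz' : σ z' < s := (hgap z' hz'z).lt_of_ne fun h => hoff ⟨z', h⟩
  exact ⟨z', fun t hdev =>
    hsc.lt_at_higher_type_of_le hs ht hσz' hz₀z' ((hopt z₀ (σ z')).trans hdev)⟩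

theorem d1Dominated_of_gt (hsc : SingleCrossing u)
    (hs : ∀ t z, StrictAnti (fun s => u t s z)) (ht : ∀ s z, StrictMono (fun t => u t s z))
    (hopt : ∀ z s, u (τ s) s z ≤ u (τ (σ z)) (σ z) z)
    (hlt : s < σ z) (hz₀ : z < z₀) :
    D1Dominated u (fun z => u (τ (σ z)) (σ z) z) s z₀ :=
  ⟨z, fun _ hdev => hsc.lt_at_lower_type_of_le hs ht hlt hz₀ ((hopt z₀ (σ z)).trans hdev)⟩

end Equilibrium

end

theorem D1_belief_at_discontinuity_gap_general
    {T S Z : Type*} [LinearOrder T] [LinearOrder S] [LinearOrder Z] [DenselyOrdered Z]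
    (u : T → S → Z → ℝ)
    (hs : ∀ (t : T) (z : Z), StrictAnti (fun s => u t s z))
    (ht : ∀ (s : S) (z : Z), StrictMono (fun t => u t s z))
    (hssc : ∀ (t'' t' : T) (s'' s' : S), (t'', s'') < (t', s') →
      ∀ z'' z' : Z, z'' < z' →
      u t' s' z'' ≥ u t'' s'' z'' → u t' s' z' > u t'' s'' z')
    (σ : Z → S) (τ : S → T)
    (hopt : ∀ (z : Z) (s : S), u (τ s) s z ≤ u (τ (σ z)) (σ z) z)
    (U : Z → ℝ) (hU : ∀ z, U z = u (τ (σ z)) (σ z) z)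
    (z : Z) (s : S)
    (hoff : s ∉ Set.range σ) (hlt : s < σ z) (hgap : ∀ k : Z, k < z → σ k ≤ s) :
    (∀ z₀ : Z, z₀ ≠ z → ∃ z' : Z, ∀ t : T, u t s z₀ ≥ U z₀ → u t s z' > U z') ∧
    (∀ P : Set Z,
      (∀ Z' : Set Z, Z'.Nonempty →
        (∀ w ∉ Z', ∃ z' : Z, ∀ t : T, u t s w ≥ U w → u t s z' > U z') → P ⊆ Z') →
      P ⊆ {z}) := by
  obtain rfl : U = fun z => u (τ (σ z)) (σ z) z := funext hU
  have hdom : ∀ z₀, z₀ ≠ z → D1Dominated u _ s z₀ := fun z₀ hne =>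
    hne.lt_or_gt.elim (d1Dominated_of_lt_of_gap hssc hs ht hopt hoff hgap)
      (d1Dominated_of_gt hssc hs ht hopt hlt)
  exact ⟨hdom, fun P hP => hP {z} (Set.singleton_nonempty z) hdom⟩

/-- Proposition 1, item 1: at an off-path action `s` created by a discontinuity of `σ`
at `z`, every type `z₀ ≠ z` is D1-dominated at `s`; consequently any belief at `s`
passing Criterion D1 has support contained in `{z}`. -/
theorem D1_belief_at_discontinuity_gap
    {T S Z : Type*} [LinearOrder T] [LinearOrder S] [LinearOrder Z] [DenselyOrdered Z]
    (u : T → S → Z → ℝ)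
    (hs : ∀ (t : T) (z : Z), StrictAnti (fun s => u t s z))
    (ht : ∀ (s : S) (z : Z), StrictMono (fun t => u t s z))
    (hz : ∀ (t : T) (s : S), StrictMono (fun z => u t s z))
    (hssc : ∀ (t'' t' : T) (s'' s' : S), (t'', s'') < (t', s') →
      ∀ z'' z' : Z, z'' < z' →
      u t' s' z'' ≥ u t'' s'' z'' → u t' s' z' > u t'' s'' z')
    (σ : Z → S) (τ : S → T)
    (hopt : ∀ (z : Z) (s : S), u (τ s) s z ≤ u (τ (σ z)) (σ z) z)
    (U : Z → ℝ) (hU : ∀ z, U z = u (τ (σ z)) (σ z) z)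
    (z : Z) (s : S)
    (hoff : s ∉ Set.range σ) (hlt : s < σ z) (hgap : ∀ k : Z, k < z → σ k ≤ s) :
    (∀ z₀ : Z, z₀ ≠ z → ∃ z' : Z, ∀ t : T, u t s z₀ ≥ U z₀ → u t s z' > U z') ∧
    (∀ P : Set Z,
      (∀ Z' : Set Z, Z'.Nonempty →
        (∀ w ∉ Z', ∃ z' : Z, ∀ t : T, u t s w ≥ U w → u t s z' > U z') → P ⊆ Z') →
      P ⊆ {z}) :=
  D1_belief_at_discontinuity_gap_general u hs ht hssc σ τ hopt U hU z s hoff hlt hgap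
end

section
/- (Proposition 1, item 2: D1 belief above the top of the action range.) Let T, S be linear orders, Z a linear order with a greatest element z̄, u : T × S × Z → ℝ monotone-supermodular, and σ : Z → S, τ : S → T sender-optimal with equilibrium utility U(z) := u(τ(σ(z)), σ(z), z). If s ∈ S satisfies s > σ(z̄), then every type z₀ < z̄ is D1-dominated at s by z̄: for every t ∈ T, u(t, s, z₀) ≥ U(z₀) implies u(t, s, z̄) > U(z̄). Consequently, any belief at s passing Criterion D1 has support contained in {z̄}. -/
/-!
A deviation to `s` above the top type's action `σ z̄` that a lower type `z₀` weakly prefers to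
its equilibrium must be rewarded with a reaction at least `τ (σ z̄)`: a lower reaction together
with the higher (costlier) action would leave `z₀` strictly worse off than mimicking `z̄`.
So `(t, s)` is above `(τ (σ z̄), σ z̄)` in the product order, and single crossing turns the weak
preference of `z₀` into a strict preference of `z̄`.
-/

section SingleCrossing

variable {T S Z : Type*} [LinearOrder T] [LinearOrder S] {u : T → S → Z → ℝ}

theorem reaction_le_of_utility_le_of_action_lt
    (hs : ∀ (t : T) (z : Z), StrictAnti (fun s => u t s z))
    (ht : ∀ (s : S) (z : Z), StrictMono (fun t => u t s z))
    {t₁ t : T} {s₁ s : S} {z : Z} (hs₁ : s₁ < s) (h : u t₁ s₁ z ≤ u t s z) : t₁ ≤ t := by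
  by_contra! hlt
  exact h.not_gt ((ht s z hlt).trans (hs t₁ z hs₁))

variable [LinearOrder Z]

theorem utility_lt_of_higher_action_of_lower_type_le
    (hs : ∀ (t : T) (z : Z), StrictAnti (fun s => u t s z))
    (ht : ∀ (s : S) (z : Z), StrictMono (fun t => u t s z))
    (hssc : ∀ (t'' t' : T) (s'' s' : S), (t'', s'') < (t', s') →
      ∀ z'' z' : Z, z'' < z' →
      u t' s' z'' ≥ u t'' s'' z'' → u t' s' z' > u t'' s'' z')
    {t₁ t : T} {s₁ s : S} {z₀ z₁ : Z} (hs₁ : s₁ < s) (hz : z₀ < z₁)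
    (h : u t₁ s₁ z₀ ≤ u t s z₀) : u t₁ s₁ z₁ < u t s z₁ :=
  have hpair : (t₁, s₁) < (t, s) :=
    Prod.mk_lt_mk.mpr (Or.inr ⟨reaction_le_of_utility_le_of_action_lt hs ht hs₁ h, hs₁⟩)
  hssc t₁ t s₁ s hpair z₀ z₁ hz h

theorem equilibrium_lt_of_lower_type_weakly_prefers
    (hs : ∀ (t : T) (z : Z), StrictAnti (fun s => u t s z))
    (ht : ∀ (s : S) (z : Z), StrictMono (fun t => u t s z))
    (hssc : ∀ (t'' t' : T) (s'' s' : S), (t'', s'') < (t', s') →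
      ∀ z'' z' : Z, z'' < z' →
      u t' s' z'' ≥ u t'' s'' z'' → u t' s' z' > u t'' s'' z')
    {σ : Z → S} {τ : S → T}
    (hopt : ∀ (z : Z) (s : S), u (τ s) s z ≤ u (τ (σ z)) (σ z) z)
    {U : Z → ℝ} (hU : ∀ z, U z = u (τ (σ z)) (σ z) z)
    {s : S} {z₀ z₁ : Z} (hz : z₀ < z₁) (hs₁ : σ z₁ < s) (t : T) (h : u t s z₀ ≥ U z₀) :
    u t s z₁ > U z₁ := by
  rw [hU] at h ⊢
  exact utility_lt_of_higher_action_of_lower_type_le hs ht hssc hs₁ hz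
    ((hopt z₀ (σ z₁)).trans h)

end SingleCrossing

theorem D1_belief_above_top_general
    {T S Z : Type*} [LinearOrder T] [LinearOrder S] [LinearOrder Z]
    (u : T → S → Z → ℝ)
    (hs : ∀ (t : T) (z : Z), StrictAnti (fun s => u t s z))
    (ht : ∀ (s : S) (z : Z), StrictMono (fun t => u t s z))
    (hssc : ∀ (t'' t' : T) (s'' s' : S), (t'', s'') < (t', s') →
      ∀ z'' z' : Z, z'' < z' →
      u t' s' z'' ≥ u t'' s'' z'' → u t' s' z' > u t'' s'' z')
    (σ : Z → S) (τ : S → T)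
    (hopt : ∀ (z : Z) (s : S), u (τ s) s z ≤ u (τ (σ z)) (σ z) z)
    (U : Z → ℝ) (hU : ∀ z, U z = u (τ (σ z)) (σ z) z)
    (zbar : Z) (htopel : ∀ z : Z, z ≤ zbar)
    (s : S) (hlt : σ zbar < s) :
    (∀ z₀ : Z, z₀ < zbar → ∀ t : T, u t s z₀ ≥ U z₀ → u t s zbar > U zbar) ∧
    (∀ P : Set Z,
      (∀ Z' : Set Z, Z'.Nonempty →
        (∀ w ∉ Z', ∃ z' : Z, ∀ t : T, u t s w ≥ U w → u t s z' > U z') → P ⊆ Z') →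
      P ⊆ {zbar}) := by
  have top_dominates (z₀ : Z) (hz₀ : z₀ < zbar) (t : T) : u t s z₀ ≥ U z₀ → u t s zbar > U zbar :=
    equilibrium_lt_of_lower_type_weakly_prefers hs ht hssc hopt hU hz₀ hlt t
  refine ⟨top_dominates, fun P hP => hP {zbar} (Set.singleton_nonempty zbar) fun w hw => ?_⟩
  exact ⟨zbar, top_dominates w ((htopel w).lt_of_ne hw)⟩

/-- Proposition 1, item 2: at an off-path action `s > σ z̄` above the top of the action
range, every type `z₀ < z̄` is D1-dominated at `s` by the greatest type `z̄`;
consequently any belief at `s` passing Criterion D1 has support contained in `{z̄}`. -/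
theorem D1_belief_above_top
    {T S Z : Type*} [LinearOrder T] [LinearOrder S] [LinearOrder Z]
    (u : T → S → Z → ℝ)
    (hs : ∀ (t : T) (z : Z), StrictAnti (fun s => u t s z))
    (ht : ∀ (s : S) (z : Z), StrictMono (fun t => u t s z))
    (hz : ∀ (t : T) (s : S), StrictMono (fun z => u t s z))
    (hssc : ∀ (t'' t' : T) (s'' s' : S), (t'', s'') < (t', s') →
      ∀ z'' z' : Z, z'' < z' →
      u t' s' z'' ≥ u t'' s'' z'' → u t' s' z' > u t'' s'' z')
    (σ : Z → S) (τ : S → T)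
    (hopt : ∀ (z : Z) (s : S), u (τ s) s z ≤ u (τ (σ z)) (σ z) z)
    (U : Z → ℝ) (hU : ∀ z, U z = u (τ (σ z)) (σ z) z)
    (zbar : Z) (htopel : ∀ z : Z, z ≤ zbar)
    (s : S) (hlt : σ zbar < s) :
    (∀ z₀ : Z, z₀ < zbar → ∀ t : T, u t s z₀ ≥ U z₀ → u t s zbar > U zbar) ∧
    (∀ P : Set Z,
      (∀ Z' : Set Z, Z'.Nonempty →
        (∀ w ∉ Z', ∃ z' : Z, ∀ t : T, u t s w ≥ U w → u t s z' > U z') → P ⊆ Z') →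
      P ⊆ {zbar}) :=
  D1_belief_above_top_general u hs ht hssc σ τ hopt U hU zbar htopel s hlt
end

section
/- (Proposition 1, item 3: D1 belief below the bottom of the action range.) Let T, S be linear orders, Z a linear order with a least element z̲, u : T × S × Z → ℝ monotone-supermodular, and σ : Z → S, τ : S → T sender-optimal with equilibrium utility U(z) := u(τ(σ(z)), σ(z), z). If s ∈ S satisfies s < σ(z̲), then every type z₀ > z̲ is D1-dominated at s by z̲: for every t ∈ T, u(t, s, z₀) ≥ U(z₀) implies u(t, s, z̲) > U(z̲). Consequently, any belief at s passing Criterion D1 has support contained in {z̲}. -/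
/-!
If the lowest type `z̲` gets at least `U z̲` from `(t, s)`, then `t` must exceed `τ (σ z̲)`, since
otherwise `(t, s)` lies below `z̲`'s own choice `(τ (σ z̲), σ z̲)` in the product order and single
crossing would make every higher type strictly prefer `z̲`'s choice to `(t, s)`, contradicting
`u t s z₀ ≥ U z₀` and optimality at `z₀`. But for `t > τ (σ z̲)` the lower action `s < σ z̲` and
the higher reaction both strictly raise `z̲`'s payoff above `U z̲`.
-/

section

variable {T S Z : Type*} [LinearOrder T] [LinearOrder S] [LinearOrder Z]

def D1Dominates (u : T → S → Z → ℝ) (U : Z → ℝ) (s : S) (z' w : Z) : Prop :=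
  ∀ t : T, u t s w ≥ U w → u t s z' > U z'

theorem d1Dominates_of_lt_of_lt {u : T → S → Z → ℝ} {U : Z → ℝ}
    (hs : ∀ (t : T) (z : Z), StrictAnti (fun s => u t s z))
    (ht : ∀ (s : S) (z : Z), StrictMono (fun t => u t s z))
    (hssc : ∀ (t'' t' : T) (s'' s' : S), (t'', s'') < (t', s') →
      ∀ z'' z' : Z, z'' < z' →
      u t' s' z'' ≥ u t'' s'' z'' → u t' s' z' > u t'' s'' z')
    {z z₀ : Z} {t₁ : T} {s₁ s : S} (hUz : U z = u t₁ s₁ z) (hUz₀ : u t₁ s₁ z₀ ≤ U z₀)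
    (hzz₀ : z < z₀) (hs₁ : s < s₁) :
    D1Dominates u U s z z₀ := by
  intro t hge
  rcases le_or_gt t t₁ with hle | hgt
  · by_contra! hcon
    have hbelow : (t, s) < (t₁, s₁) := Prod.lt_iff.mpr (Or.inr ⟨hle, hs₁⟩)
    have hprefers := hssc t t₁ s s₁ hbelow z z₀ hzz₀ (hUz ▸ hcon)
    linarith
  · calc U z = u t₁ s₁ z := hUz
      _ < u t₁ s z := hs t₁ z hs₁
      _ < u t s z := ht s z hgt

end

theorem D1_belief_below_bottom_general
    {T S Z : Type*} [LinearOrder T] [LinearOrder S] [LinearOrder Z]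
    (u : T → S → Z → ℝ)
    (hs : ∀ (t : T) (z : Z), StrictAnti (fun s => u t s z))
    (ht : ∀ (s : S) (z : Z), StrictMono (fun t => u t s z))
    (hssc : ∀ (t'' t' : T) (s'' s' : S), (t'', s'') < (t', s') →
      ∀ z'' z' : Z, z'' < z' →
      u t' s' z'' ≥ u t'' s'' z'' → u t' s' z' > u t'' s'' z')
    (σ : Z → S) (τ : S → T)
    (hopt : ∀ (z : Z) (s : S), u (τ s) s z ≤ u (τ (σ z)) (σ z) z)
    (U : Z → ℝ) (hU : ∀ z, U z = u (τ (σ z)) (σ z) z)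
    (zlow : Z) (hbotel : ∀ z : Z, zlow ≤ z)
    (s : S) (hlt : s < σ zlow) :
    (∀ z₀ : Z, zlow < z₀ → ∀ t : T, u t s z₀ ≥ U z₀ → u t s zlow > U zlow) ∧
    (∀ P : Set Z,
      (∀ Z' : Set Z, Z'.Nonempty →
        (∀ w ∉ Z', ∃ z' : Z, ∀ t : T, u t s w ≥ U w → u t s z' > U z') → P ⊆ Z') →
      P ⊆ {zlow}) := by
  have hdom : ∀ z₀ : Z, zlow < z₀ → D1Dominates u U s zlow z₀ := fun z₀ hz₀ =>
    d1Dominates_of_lt_of_lt hs ht hssc (hU zlow) ((hU z₀).symm ▸ hopt z₀ (σ zlow)) hz₀ hlt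
  refine ⟨hdom, fun P hP => hP {zlow} (Set.singleton_nonempty zlow) fun w hw => ⟨zlow, ?_⟩⟩
  exact hdom w ((hbotel w).lt_of_ne (Ne.symm hw))

/-- Proposition 1, item 3: at an off-path action `s < σ z̲` below the bottom of the
action range, every type `z₀ > z̲` is D1-dominated at `s` by the least type `z̲`;
consequently any belief at `s` passing Criterion D1 has support contained in `{z̲}`. -/
theorem D1_belief_below_bottom
    {T S Z : Type*} [LinearOrder T] [LinearOrder S] [LinearOrder Z]
    (u : T → S → Z → ℝ)
    (hs : ∀ (t : T) (z : Z), StrictAnti (fun s => u t s z))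
    (ht : ∀ (s : S) (z : Z), StrictMono (fun t => u t s z))
    (hz : ∀ (t : T) (s : S), StrictMono (fun z => u t s z))
    (hssc : ∀ (t'' t' : T) (s'' s' : S), (t'', s'') < (t', s') →
      ∀ z'' z' : Z, z'' < z' →
      u t' s' z'' ≥ u t'' s'' z'' → u t' s' z' > u t'' s'' z')
    (σ : Z → S) (τ : S → T)
    (hopt : ∀ (z : Z) (s : S), u (τ s) s z ≤ u (τ (σ z)) (σ z) z)
    (U : Z → ℝ) (hU : ∀ z, U z = u (τ (σ z)) (σ z) z)
    (zlow : Z) (hbotel : ∀ z : Z, zlow ≤ z)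
    (s : S) (hlt : s < σ zlow) :
    (∀ z₀ : Z, zlow < z₀ → ∀ t : T, u t s z₀ ≥ U z₀ → u t s zlow > U zlow) ∧
    (∀ P : Set Z,
      (∀ Z' : Set Z, Z'.Nonempty →
        (∀ w ∉ Z', ∃ z' : Z, ∀ t : T, u t s w ≥ U w → u t s z' > U z') → P ⊆ Z') →
      P ⊆ {zlow}) :=
  D1_belief_below_bottom_general u hs ht hssc σ τ hopt U hU zlow hbotel s hlt
end

section
/- (Lemma A: uniqueness of the bottom match.) Let S, Z, X be linear orders, n : Z → X strictly increasing, v : X × S × Z → ℝ nondecreasing in s, strictly increasing in x, and nondecreasing in z, and c : S × Z → ℝ strictly increasing in s and strictly decreasing in z. Then for any t_ℓ ∈ ℝ, the system of equations v(n(z), s, z) = t_ℓ and c(s, z) = t_ℓ has at most one solution (s, z) ∈ S × Z. -/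
/-! Compare two solutions with `z₁ < z₂`. Equal costs force `s₁ ≤ s₂`, since raising `z` lowers
the cost and only a higher action can compensate. But then the matched surplus
`v (n z) s z` is strictly larger at the second solution, as `n` and `v` are strictly increasing
in the receiver type, so the two surpluses cannot both equal `t_ℓ`. Hence all solutions share
`z`, and then `s` by strict monotonicity of the cost. -/

section

variable {S Z X β : Type*} [LinearOrder S] [Preorder Z] [Preorder X] [Preorder β]

theorem le_of_eq_of_le_of_strictMono_of_antitone (c : S → Z → β)
    (hcs : ∀ z, StrictMono (fun s => c s z)) (hcz : ∀ s, Antitone (fun z => c s z))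
    {s₁ s₂ : S} {z₁ z₂ : Z} (hc : c s₁ z₁ = c s₂ z₂) (hz : z₁ ≤ z₂) : s₁ ≤ s₂ :=
  (hcs z₁).le_iff_le.1 (hc.trans_le (hcz s₂ hz))

theorem matched_surplus_lt (n : Z → X) (hn : StrictMono n) (v : X → S → Z → β)
    (hvs : ∀ x z, Monotone (fun s => v x s z)) (hvx : ∀ s z, StrictMono (fun x => v x s z))
    (hvz : ∀ x s, Monotone (fun z => v x s z))
    {s₁ s₂ : S} {z₁ z₂ : Z} (hs : s₁ ≤ s₂) (hz : z₁ < z₂) :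
    v (n z₁) s₁ z₁ < v (n z₂) s₂ z₂ :=
  calc v (n z₁) s₁ z₁ < v (n z₂) s₁ z₁ := hvx s₁ z₁ (hn hz)
    _ ≤ v (n z₂) s₂ z₁ := hvs (n z₂) z₁ hs
    _ ≤ v (n z₂) s₂ z₂ := hvz (n z₂) s₂ hz.le

theorem not_lt_of_bottom_match (n : Z → X) (hn : StrictMono n) (v : X → S → Z → β)
    (hvs : ∀ x z, Monotone (fun s => v x s z)) (hvx : ∀ s z, StrictMono (fun x => v x s z))
    (hvz : ∀ x s, Monotone (fun z => v x s z)) (c : S → Z → β)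
    (hcs : ∀ z, StrictMono (fun s => c s z)) (hcz : ∀ s, Antitone (fun z => c s z))
    {t : β} {s₁ s₂ : S} {z₁ z₂ : Z} (hv₁ : v (n z₁) s₁ z₁ = t) (hc₁ : c s₁ z₁ = t)
    (hv₂ : v (n z₂) s₂ z₂ = t) (hc₂ : c s₂ z₂ = t) : ¬ z₁ < z₂ := fun hz =>
  have hs : s₁ ≤ s₂ :=
    le_of_eq_of_le_of_strictMono_of_antitone c hcs hcz (hc₁.trans hc₂.symm) hz.le
  (matched_surplus_lt n hn v hvs hvx hvz hs hz).ne (hv₁.trans hv₂.symm)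

end

/-- Lemma A: uniqueness of the bottom match. The system `v (n z) s z = t_ℓ` and
`c s z = t_ℓ` has at most one solution `(s, z)`. -/
theorem bottom_match_unique
    {S Z X : Type*} [LinearOrder S] [LinearOrder Z] [LinearOrder X]
    (n : Z → X) (hn : StrictMono n)
    (v : X → S → Z → ℝ)
    (hvs : ∀ (x : X) (z : Z), Monotone (fun s => v x s z))
    (hvx : ∀ (s : S) (z : Z), StrictMono (fun x => v x s z))
    (hvz : ∀ (x : X) (s : S), Monotone (fun z => v x s z))
    (c : S → Z → ℝ)
    (hcs : ∀ z : Z, StrictMono (fun s => c s z))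
    (hcz : ∀ s : S, StrictAnti (fun z => c s z))
    (tl : ℝ) :
    {p : S × Z | v (n p.2) p.1 p.2 = tl ∧ c p.1 p.2 = tl}.Subsingleton := by
  rintro ⟨s₁, z₁⟩ ⟨hv₁, hc₁⟩ ⟨s₂, z₂⟩ ⟨hv₂, hc₂⟩
  have hcz' : ∀ s, Antitone (fun z => c s z) := fun s => (hcz s).antitone
  have hz : z₁ = z₂ := le_antisymm
    (not_lt.1 (not_lt_of_bottom_match n hn v hvs hvx hvz c hcs hcz' hv₂ hc₂ hv₁ hc₁))
    (not_lt.1 (not_lt_of_bottom_match n hn v hvs hvx hvz c hcs hcz' hv₁ hc₁ hv₂ hc₂))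
  have hc : c s₁ z₁ = c s₂ z₂ := hc₁.trans hc₂.symm
  have hs : s₁ = s₂ := le_antisymm
    (le_of_eq_of_le_of_strictMono_of_antitone c hcs hcz' hc hz.le)
    (le_of_eq_of_le_of_strictMono_of_antitone c hcs hcz' hc.symm hz.ge)
  rw [hs, hz]
end
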